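/- Let Q ∈ ℤ[X] be a monic polynomial of degree d ≥ 2 that is irreducible over ℚ, all of whose complex roots are real, with exactly one root strictly greater than 4 and the remaining d−1 roots lying in the open interval (0,4). Define P(X) = X^d · Q(X + X⁻¹ + 2) ∈ ℤ[X]. Then P is a monic integer polynomial of degree 2d, irreducible over ℚ, P has exactly one complex root τ of modulus strictly greater than 1, this root τ is real and satisfies τ > 1, every other complex root of P has modulus at most 1, at least one root of P has modulus exactly 1 (so τ is a Salem number of degree 2d), and the sum of the roots of P equals (sum of the roots of Q) − 2d. -/

import Mathlib

/-!
Over `ℂ`, `Q = ∏ (X - r)` and `P = X ^ d Q ((X + 1) ^ 2 / X)`, so `P = ∏ ((X + 1) ^ 2 - r X)`,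
and the roots of the factor `(X + 1) ^ 2 - r X` are the pair `z, z⁻¹` with `z + z⁻¹ + 2 = r`.
For the root `r > 4` this pair is real, `t > 1` and `t⁻¹`; for `r ∈ (0, 4)` it is a pair of
non-real conjugates on the unit circle. Summing `z + z⁻¹ = r - 2` over the roots of `Q` gives
the trace.

Irreducibility: for a root `a` of `P` over some `r ∈ (0, 4)`, the field `ℚ(r)` has degree `d`
and lies in `ℝ`, while `a ∈ ℚ(a) ⊇ ℚ(r)` is not real, so `[ℚ(a) : ℚ] ≥ 2d = deg P` and `P` is
the minimal polynomial of `a`.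
-/

open Polynomial IntermediateField Module

theorem Multiset.filter_add_filter_eq_self {α : Type*} {s : Multiset α} {p q : α → Prop}
    [DecidablePred p] [DecidablePred q] (hdisj : ∀ a ∈ s, p a → ¬q a)
    (hcard : card (s.filter p) + card (s.filter q) = card s) : s.filter p + s.filter q = s := by
  have hsum := filter_add_filter p q s
  rw [(filter_eq_nil (s := s) (p := fun a => p a ∧ q a)).mpr fun a ha h => hdisj a ha h.1 h.2,
    add_zero] at hsum
  rw [hsum]
  exact eq_of_le_of_card_le (filter_le _ _) (by rw [← hsum, card_add, hcard])

theorem IntermediateField.two_mul_finrank_le_of_lt {K L : Type*} [Field K] [Field L] [Algebra K L]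
    {F E : IntermediateField K L} [FiniteDimensional K E] (h : F < E) :
    2 * finrank K F ≤ finrank K E := by
  obtain ⟨k, hk⟩ := finrank_dvd_of_le_right h.le
  have hE : 0 < finrank K E := finrank_pos
  rcases k with _ | _ | k
  · omega
  · exact absurd (eq_of_le_of_finrank_eq h.le (by simpa using hk.symm)) h.ne
  · rw [hk]; nlinarith

section InvPair

variable {K : Type*} [Field K]

/-- The factor `X (X + X⁻¹ + 2 - r)` of `X ^ d Q (X + X⁻¹ + 2)` coming from a root `r` of `Q`. -/
noncomputable def invPairPoly (r : K) : K[X] := (X + 1) ^ 2 - C r * X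

theorem invPairPoly_monic (r : K) : (invPairPoly r).Monic := by
  unfold invPairPoly; monicity!

theorem invPairPoly_natDegree (r : K) : (invPairPoly r).natDegree = 2 := by
  unfold invPairPoly; compute_degree!

theorem eval_invPairPoly (r x : K) : (invPairPoly r).eval x = (x + 1) ^ 2 - r * x := by
  simp [invPairPoly]

theorem invPairPoly_add_inv_add_two {z : K} (hz : z ≠ 0) :
    invPairPoly (z + z⁻¹ + 2) = (X - C z) * (X - C z⁻¹) := by
  have : (X - C z) * (X - C z⁻¹) = X ^ 2 - C (z + z⁻¹) * X + C (z * z⁻¹) := by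
    simp only [C_add, C_mul]; ring
  rw [this, mul_inv_cancel₀ hz, invPairPoly, C_add, C_1, show (C 2 : K[X]) = 2 from rfl]
  ring

theorem roots_invPairPoly_add_inv_add_two {z : K} (hz : z ≠ 0) :
    (invPairPoly (z + z⁻¹ + 2)).roots = {z, z⁻¹} := by
  rw [invPairPoly_add_inv_add_two hz,
    roots_mul (mul_ne_zero (X_sub_C_ne_zero z) (X_sub_C_ne_zero _)),
    roots_X_sub_C, roots_X_sub_C]
  rfl

theorem exists_eq_add_inv_add_two [IsAlgClosed K] (r : K) : ∃ z ≠ 0, r = z + z⁻¹ + 2 := by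
  obtain ⟨z, hz⟩ := IsAlgClosed.exists_root (invPairPoly r)
    (by rw [degree_eq_natDegree (invPairPoly_monic r).ne_zero, invPairPoly_natDegree]; decide)
  rw [IsRoot, eval_invPairPoly] at hz
  have hz0 : z ≠ 0 := by rintro rfl; simp at hz
  refine ⟨z, hz0, ?_⟩
  field_simp
  linear_combination -hz

theorem sum_roots_invPairPoly [IsAlgClosed K] (r : K) : (invPairPoly r).roots.sum = r - 2 := by
  obtain ⟨z, hz, rfl⟩ := exists_eq_add_inv_add_two r
  rw [roots_invPairPoly_add_inv_add_two hz]
  simp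

theorem roots_prod_invPairPoly (s : Multiset K) :
    (s.map invPairPoly).prod.roots = s.bind fun r => (invPairPoly r).roots := by
  rw [roots_multiset_prod, Multiset.bind_map]
  simpa using fun r _ => (invPairPoly_monic r).ne_zero

theorem monic_prod_invPairPoly (s : Multiset K) : (s.map invPairPoly).prod.Monic :=
  monic_multiset_prod_of_monic _ _ fun r _ => invPairPoly_monic r

theorem natDegree_prod_invPairPoly (s : Multiset K) :
    (s.map invPairPoly).prod.natDegree = 2 * Multiset.card s := by
  rw [natDegree_multiset_prod_of_monic _ (by simpa using fun r _ => invPairPoly_monic r)]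
  simp [invPairPoly_natDegree, mul_comm]

theorem sum_roots_prod_invPairPoly [IsAlgClosed K] (s : Multiset K) :
    (s.map invPairPoly).prod.roots.sum = s.sum - 2 * Multiset.card s := by
  rw [roots_prod_invPairPoly, Multiset.sum_bind]
  simp [sum_roots_invPairPoly, Multiset.sum_map_sub, mul_comm]

theorem eval_sum_coeff_mul_pow {Q : K[X]} {n : ℕ} (hn : Q.natDegree ≤ n) {x : K}
    (hx : x ≠ 0) :
    (∑ i ∈ Finset.range (n + 1), C (Q.coeff i) * (X + 1) ^ (2 * i) * X ^ (n - i)).eval x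
      = x ^ n * Q.eval ((x + 1) ^ 2 / x) := by
  rw [eval_eq_sum_range' (Nat.lt_succ_of_le hn), Finset.mul_sum, eval_finsetSum]
  refine Finset.sum_congr rfl fun i hi => ?_
  have hi : i ≤ n := Nat.lt_succ_iff.mp (Finset.mem_range.mp hi)
  simp only [eval_mul, eval_C, eval_pow, eval_add, eval_X, eval_one]
  rw [div_pow, ← pow_mul, pow_sub₀ x hx hi]
  field_simp

theorem sum_coeff_mul_pow_eq_prod_invPairPoly [Infinite K] {Q : K[X]} (hQ : Q.Monic)
    (hsplit : Q.Splits) :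
    ∑ i ∈ Finset.range (Q.natDegree + 1),
      C (Q.coeff i) * (X + 1) ^ (2 * i) * X ^ (Q.natDegree - i)
      = (Q.roots.map invPairPoly).prod := by
  refine sub_eq_zero.mp (eq_zero_of_infinite_isRoot _ ?_)
  refine ((Set.finite_singleton (0 : K)).infinite_compl).mono fun x (hx : x ≠ 0) => ?_
  rw [Set.mem_ofPred_eq, IsRoot.def, eval_sub, sub_eq_zero, eval_sum_coeff_mul_pow le_rfl hx,
    hsplit.eval_eq_prod_roots, hQ.leadingCoeff, one_mul, eval_multiset_prod, Multiset.map_map,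
    hsplit.natDegree_eq_card_roots, ← Multiset.prod_replicate, ← Multiset.map_const',
    ← Multiset.prod_map_mul]
  refine congrArg _ (Multiset.map_congr rfl fun r _ => ?_)
  simp only [Function.comp_apply, eval_invPairPoly]
  field_simp

theorem map_sum_coeff_mul_pow_eq_prod_invPairPoly {R L : Type*} [CommRing R] [Field L]
    [IsAlgClosed L] [Algebra R L] {Q : R[X]} (hQ : Q.Monic) :
    (∑ i ∈ Finset.range (Q.natDegree + 1),
      C (Q.coeff i) * (X + 1) ^ (2 * i) * X ^ (Q.natDegree - i)).map (algebraMap R L)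
      = ((Q.aroots L).map invPairPoly).prod := by
  rw [aroots_def, ← sum_coeff_mul_pow_eq_prod_invPairPoly (hQ.map _) (IsAlgClosed.splits _),
    hQ.natDegree_map]
  simp [Polynomial.map_sum, coeff_map]

end InvPair

theorem norm_eq_one_of_mem_roots_invPairPoly {r z : ℂ} (hr : r.im = 0) (h0 : 0 < r.re)
    (h4 : r.re < 4) (hz : z ∈ (invPairPoly r).roots) : ‖z‖ = 1 ∧ z.im ≠ 0 := by
  have hroot := isRoot_of_mem_roots hz
  rw [IsRoot.def, eval_invPairPoly] at hroot
  have hre := congrArg Complex.re hroot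
  have him := congrArg Complex.im hroot
  simp only [sq, Complex.sub_re, Complex.sub_im, Complex.mul_re, Complex.mul_im, Complex.add_re,
    Complex.add_im, Complex.one_re, Complex.one_im, hr, Complex.zero_re, Complex.zero_im] at hre him
  have him_ne : z.im ≠ 0 := by
    intro h0'
    rw [h0'] at hre
    nlinarith [sq_nonneg (2 * (z.re + 1) - r.re)]
  have hx : 2 * (z.re + 1) = r.re := by
    apply mul_left_cancel₀ him_ne; linear_combination him
  refine ⟨?_, him_ne⟩
  rw [Complex.norm_def, Complex.normSq_apply, Real.sqrt_eq_one]
  nlinarith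

theorem exists_one_lt_eq_add_inv_add_two {r : ℝ} (hr : 4 < r) :
    ∃ t : ℝ, 1 < t ∧ r = t + t⁻¹ + 2 := by
  set s := √(r * (r - 4)) with hs
  have hs0 : 0 < s := Real.sqrt_pos.mpr (by nlinarith)
  have hs2 : s ^ 2 = r * (r - 4) := Real.sq_sqrt (by nlinarith)
  refine ⟨(r - 2 + s) / 2, by linarith, ?_⟩
  have : r - 2 + s ≠ 0 := by linarith
  field_simp
  linear_combination -hs2

theorem roots_invPairPoly_of_four_lt {r : ℂ} (hr : r.im = 0) (h4 : 4 < r.re) :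
    ∃ t : ℝ, 1 < t ∧ (invPairPoly r).roots = {(t : ℂ), (t : ℂ)⁻¹} := by
  obtain ⟨t, ht, hrt⟩ := exists_one_lt_eq_add_inv_add_two h4
  have hr' : r = (t : ℂ) + (t : ℂ)⁻¹ + 2 := by
    apply Complex.ext <;> simp [hr, hrt]
  have ht0 : (t : ℂ) ≠ 0 := by exact_mod_cast (by linarith : t ≠ 0)
  exact ⟨t, ht, hr' ▸ roots_invPairPoly_add_inv_add_two ht0⟩

def IsSalemRoot (R : Multiset ℂ) (τ : ℂ) : Prop :=
  τ ∈ R ∧ τ.im = 0 ∧ 1 < τ.re ∧ 1 < ‖τ‖ ∧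
    (R.filter fun z => 1 < ‖z‖).card = 1 ∧
    (∀ z ∈ R, z ≠ τ → ‖z‖ ≤ 1) ∧ ∃ z ∈ R, ‖z‖ = 1

theorem isSalemRoot_of_eq_add {R S : Multiset ℂ} {t : ℝ} (ht : 1 < t)
    (hR : R = {(t : ℂ), (t : ℂ)⁻¹} + S) (hS : ∀ z ∈ S, ‖z‖ = 1) (hS0 : S ≠ 0) :
    IsSalemRoot R t := by
  have hnorm_t : ‖(t : ℂ)‖ = t := by simp [abs_of_pos (zero_lt_one.trans ht)]
  have hnorm_inv : ‖(t : ℂ)⁻¹‖ < 1 := by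
    rw [norm_inv, hnorm_t]; exact inv_lt_one_of_one_lt₀ ht
  have hfilter : R.filter (fun z => 1 < ‖z‖) = {(t : ℂ)} := by
    rw [hR, Multiset.filter_add,
      (Multiset.filter_eq_nil (s := S)).mpr fun z hz => by simp [hS z hz], add_zero,
      Multiset.insert_eq_cons, Multiset.filter_cons_of_pos _ (by rwa [hnorm_t]),
      Multiset.filter_singleton, if_neg hnorm_inv.not_gt]
    rfl
  obtain ⟨w, hw⟩ := Multiset.exists_mem_of_ne_zero hS0
  refine ⟨by simp [hR], by simp, by simpa using ht, by rwa [hnorm_t], by simp [hfilter],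
    fun z hz hzt => ?_, w, by simp [hR, hw], hS w hw⟩
  by_contra! hz1
  have : z ∈ R.filter (fun z => 1 < ‖z‖) := Multiset.mem_filter.mpr ⟨hz, hz1⟩
  exact hzt (by simpa [hfilter] using this)

theorem irreducible_of_aeval_eq_zero_of_add_inv_real {P Q : ℚ[X]} (hP : P.Monic)
    (hQ : Irreducible Q) (hQ_monic : Q.Monic) {a : ℂ} (hPa : aeval a P = 0)
    (hQa : aeval (a + a⁻¹ + 2) Q = 0) (ha_im : a.im ≠ 0) (hreal : (a + a⁻¹).im = 0)
    (hdeg : P.natDegree = 2 * Q.natDegree) : Irreducible P := by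
  set q := a + a⁻¹ + 2
  have ha_int : IsIntegral ℚ a := ⟨P, hP, by rwa [← aeval_def]⟩
  have : FiniteDimensional ℚ ℚ⟮a⟯ := adjoin.finiteDimensional ha_int
  have hq_mem : q ∈ ℚ⟮a⟯ := by
    have ha_mem := mem_adjoin_simple_self ℚ a
    exact add_mem (add_mem ha_mem (inv_mem ha_mem)) (by simp)
  have hq_int : IsIntegral ℚ q :=
    isIntegral_iff.mp (IsIntegral.of_finite ℚ (⟨q, hq_mem⟩ : ℚ⟮a⟯))
  have hq_real : ℚ⟮q⟯ ≤ (Complex.ofRealAm.restrictScalars ℚ).fieldRange :=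
    adjoin_simple_le_iff.mpr ⟨q.re, Complex.ext (by simp) (by simp [q, hreal])⟩
  have ha_not_mem : a ∉ ℚ⟮q⟯ := fun h => by
    obtain ⟨x, hx⟩ := hq_real h
    exact ha_im (by simp [← hx])
  have hlt : ℚ⟮q⟯ < ℚ⟮a⟯ := lt_of_le_of_ne (adjoin_simple_le_iff.mpr hq_mem)
    fun h => ha_not_mem (h ▸ mem_adjoin_simple_self ℚ a)
  have hQ_minpoly : minpoly ℚ q = Q := (minpoly.eq_of_irreducible_of_monic hQ hQa hQ_monic).symm
  have hmin_deg : P.natDegree ≤ (minpoly ℚ a).natDegree := by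
    rw [← adjoin.finrank ha_int, hdeg, ← hQ_minpoly, ← adjoin.finrank hq_int]
    exact two_mul_finrank_le_of_lt hlt
  rw [eq_of_monic_of_dvd_of_natDegree_le (minpoly.monic ha_int) hP (minpoly.dvd ℚ a hPa) hmin_deg]
  exact minpoly.irreducible ha_int

theorem exists_isSalemRoot_bind_invPairPoly {s : Multiset ℂ} (hreal : ∀ z ∈ s, z.im = 0)
    (hbig : (s.filter fun z => 4 < z.re).card = 1)
    (hsmall : (s.filter fun z => 0 < z.re ∧ z.re < 4).card = Multiset.card s - 1)
    (hs : 2 ≤ Multiset.card s) :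
    ∃ τ, IsSalemRoot (s.bind fun r => (invPairPoly r).roots) τ := by
  obtain ⟨q, hq⟩ := Multiset.card_eq_one.mp hbig
  have hs_eq : s = q ::ₘ s.filter fun z => 0 < z.re ∧ z.re < 4 := by
    have hpart := Multiset.filter_add_filter_eq_self (s := s) (p := fun z => 4 < z.re)
      (q := fun z => 0 < z.re ∧ z.re < 4) (fun z _ h h' => by linarith [h'.2]) (by omega)
    rw [hq] at hpart
    exact hpart.symm
  have hq_mem : q ∈ s.filter fun z => 4 < z.re := hq ▸ Multiset.mem_singleton_self q
  obtain ⟨t, ht, ht_roots⟩ := roots_invPairPoly_of_four_lt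
    (hreal q (Multiset.mem_of_mem_filter hq_mem)) (Multiset.mem_filter.mp hq_mem).2
  refine ⟨t, isSalemRoot_of_eq_add ht (by rw [hs_eq, Multiset.cons_bind, ht_roots])
    (fun z hz => ?_) ?_⟩
  · obtain ⟨r, hr, hzr⟩ := Multiset.mem_bind.mp hz
    obtain ⟨hr_mem, hr0, hr4⟩ := Multiset.mem_filter.mp hr
    exact (norm_eq_one_of_mem_roots_invPairPoly (hreal r hr_mem) hr0 hr4 hzr).1
  · rw [← Multiset.card_pos, Multiset.card_bind]
    simp only [Function.comp_apply, IsAlgClosed.card_roots_eq_natDegree, invPairPoly_natDegree,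
      Multiset.map_const', Multiset.sum_replicate, smul_eq_mul]
    omega

theorem salem_from_totally_positive
    (d : ℕ) (hd : 2 ≤ d) (Q : Polynomial ℤ) (hQmonic : Q.Monic)
    (hQdeg : Q.natDegree = d)
    (hQirr : Irreducible (Q.map (Int.castRingHom ℚ)))
    (hQreal : ∀ z ∈ Q.aroots ℂ, z.im = 0)
    (hQbig : ((Q.aroots ℂ).filter fun z => 4 < z.re).card = 1)
    (hQsmall : ((Q.aroots ℂ).filter fun z => 0 < z.re ∧ z.re < 4).card = d - 1)
    (P : Polynomial ℤ)
    (hP : P = ∑ i ∈ Finset.range (d + 1),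
      C (Q.coeff i) * (X + 1) ^ (2 * i) * X ^ (d - i)) :
    P.Monic ∧ P.natDegree = 2 * d ∧
    Irreducible (P.map (Int.castRingHom ℚ)) ∧
    (∃ τ : ℂ, τ ∈ P.aroots ℂ ∧ τ.im = 0 ∧ 1 < τ.re ∧
      1 < ‖τ‖ ∧
      ((P.aroots ℂ).filter fun z => 1 < ‖z‖).card = 1 ∧
      (∀ z ∈ P.aroots ℂ, z ≠ τ → ‖z‖ ≤ 1) ∧
      (∃ z ∈ P.aroots ℂ, ‖z‖ = 1)) ∧
    (P.aroots ℂ).sum = (Q.aroots ℂ).sum - 2 * d := by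
  have hs_card : Multiset.card (Q.aroots ℂ) = d :=
    hQdeg ▸ IsAlgClosed.card_aroots_eq_natDegree_of_leadingCoeff_ne_zero (by simp [hQmonic])
  have hPC : P.map (algebraMap ℤ ℂ) = ((Q.aroots ℂ).map invPairPoly).prod := by
    rw [hP, ← hQdeg, map_sum_coeff_mul_pow_eq_prod_invPairPoly hQmonic]
  have hroots : P.aroots ℂ = (Q.aroots ℂ).bind fun r => (invPairPoly r).roots := by
    rw [aroots_def, hPC, roots_prod_invPairPoly]
  have hinj : Function.Injective (algebraMap ℤ ℂ) := RingHom.injective_int _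
  have hPmonic : P.Monic := monic_of_injective hinj (hPC ▸ monic_prod_invPairPoly _)
  have hPdeg : P.natDegree = 2 * d := by
    rw [← natDegree_map_eq_of_injective hinj, hPC, natDegree_prod_invPairPoly, hs_card]
  obtain ⟨q, hq⟩ : ∃ q, q ∈ (Q.aroots ℂ).filter fun z : ℂ => 0 < z.re ∧ z.re < 4 :=
    Multiset.card_pos_iff_exists_mem.mp (by omega)
  obtain ⟨hq_root, hq0, hq4⟩ := Multiset.mem_filter.mp hq
  obtain ⟨a, ha0, rfl⟩ := exists_eq_add_inv_add_two q
  have ha_root : a ∈ (invPairPoly (a + a⁻¹ + 2)).roots := by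
    simp [roots_invPairPoly_add_inv_add_two ha0]
  have ha_mem : a ∈ P.aroots ℂ := hroots ▸ Multiset.mem_bind.mpr ⟨_, hq_root, ha_root⟩
  refine ⟨hPmonic, hPdeg, ?_, hroots ▸ exists_isSalemRoot_bind_invPairPoly hQreal hQbig
    (by rw [hQsmall, hs_card]) (by omega), ?_⟩
  · refine irreducible_of_aeval_eq_zero_of_add_inv_real (hPmonic.map _) hQirr (hQmonic.map _)
      ?_ ?_ (norm_eq_one_of_mem_roots_invPairPoly (hQreal _ hq_root) hq0 hq4 ha_root).2
      (by simpa using hQreal _ hq_root)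
      (by rw [hPmonic.natDegree_map, hQmonic.natDegree_map, hPdeg, hQdeg])
    all_goals rw [← algebraMap_int_eq, aeval_map_algebraMap]
    exacts [(mem_aroots.mp ha_mem).2, (mem_aroots.mp hq_root).2]
  · rw [aroots_def, hPC, sum_roots_prod_invPairPoly, hs_card]
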